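/- arXiv:2511.13870 — 2 statements merged into one kernel-verified Lean document; each statement's English description precedes it below -/
import Mathlib

section
/- Consider the closed-loop stochastic recursion x(k+1) = (A + B K C(k)) x(k) with deterministic initial condition x(0) = x₀ ∈ ℝⁿ, where C(k) = Diag(c₁(k)/p, …, cₙ(k)/p) and the family (cᵢ(k))_{k∈ℕ, 1≤i≤n} consists of mutually independent Bernoulli random variables each with parameter p ∈ (0,1]. Let D := A + B K, L := B K, and f(p) := ‖Dᵀ D + ((1−p)/p) · Diag(Lᵀ L)‖₂ (spectral norm). Then for every k ∈ ℕ, E[‖x(k+1)‖²] ≤ f(p) · E[‖x(k)‖²]. -/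
open MeasureTheory ProbabilityTheory Matrix Filter

/-- The spectral norm (ℓ²-operator norm) of a real square matrix. -/
noncomputable def specNorm {n : ℕ} (M : Matrix (Fin n) (Fin n) ℝ) : ℝ :=
  ‖LinearMap.toContinuousLinearMap (Matrix.toEuclideanLin M)‖

/-!
Write `x(k+1) = G(C(k)) x(k)` with `G(C) = A + L C`. Since `x(k)` is a function of
`C(0), …, C(k-1)`, it is independent of `C(k)`, hence
`E‖x(k+1)‖² = E[x(k)ᵀ G(C(k))ᵀ G(C(k)) x(k)] = E[x(k)ᵀ E[GᵀG] x(k)]`.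
The moments `E[cⱼ/p] = 1` and `E[(cⱼ/p)(cⱼ'/p)] = 1 + δⱼⱼ' (1-p)/p` give
`E[GᵀG] = DᵀD + ((1-p)/p) Diag(LᵀL) =: S`, and `xᵀ S x ≤ ‖S‖₂ ‖x‖²`.
Every random variable involved takes finitely many values, which settles integrability.
-/

lemma sum_sq_mulVec {ι κ : Type*} [Fintype ι] [Fintype κ] (G : Matrix κ ι ℝ) (v : ι → ℝ) :
    ∑ i, (G *ᵥ v) i ^ 2 = v ⬝ᵥ ((Gᵀ * G) *ᵥ v) := by
  rw [← mulVec_mulVec, dotProduct_mulVec, vecMul_transpose]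
  simp [dotProduct, sq]

lemma dotProduct_mulVec_eq_sum {ι : Type*} [Fintype ι] (M : Matrix ι ι ℝ) (v : ι → ℝ) :
    v ⬝ᵥ (M *ᵥ v) = ∑ j, ∑ j', v j * v j' * M j j' := by
  simp only [dotProduct, mulVec, Finset.mul_sum]
  exact Finset.sum_congr rfl fun _ _ => Finset.sum_congr rfl fun _ _ => by ring

lemma dotProduct_mulVec_le_specNorm_mul {n : ℕ} (S : Matrix (Fin n) (Fin n) ℝ) (v : Fin n → ℝ) :
    v ⬝ᵥ (S *ᵥ v) ≤ specNorm S * ∑ i, v i ^ 2 := by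
  set V : EuclideanSpace ℝ (Fin n) := WithLp.toLp 2 v
  have hV : ‖V‖ ^ 2 = ∑ i, v i ^ 2 := by simp [V, EuclideanSpace.norm_sq_eq]
  have hinner : v ⬝ᵥ (S *ᵥ v) = inner ℝ V (Matrix.toEuclideanLin S V) := by
    simp [V, PiLp.inner_apply, dotProduct, mul_comm]
  calc v ⬝ᵥ (S *ᵥ v) ≤ ‖V‖ * ‖Matrix.toEuclideanLin S V‖ := hinner ▸ real_inner_le_norm _ _
    _ ≤ ‖V‖ * (specNorm S * ‖V‖) :=
      mul_le_mul_of_nonneg_left ((Matrix.toEuclideanLin S).toContinuousLinearMap.le_opNorm V)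
        (norm_nonneg _)
    _ = specNorm S * ∑ i, v i ^ 2 := by rw [← hV]; ring

lemma integrable_comp_of_finite_range {Ω β E : Type*} [MeasurableSpace Ω] {μ : Measure Ω}
    [IsFiniteMeasure μ] [NormedAddCommGroup E] {Y : Ω → β} (hY : (Set.range Y).Finite)
    {g : β → E} (hgY : AEStronglyMeasurable (fun ω => g (Y ω)) μ) :
    Integrable (fun ω => g (Y ω)) μ := by
  obtain ⟨C, hC⟩ := ((hY.image g).image norm).bddAbove
  exact .of_bound hgY C (.of_forall fun ω => hC ⟨g (Y ω), ⟨Y ω, ⟨ω, rfl⟩, rfl⟩, rfl⟩)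

lemma finite_range_of_zero_or_one {Ω ι : Type*} [Finite ι] {c : ι → Ω → ℝ}
    (h01 : ∀ i ω, c i ω = 0 ∨ c i ω = 1) : (Set.range fun ω i => c i ω).Finite :=
  (Set.Finite.pi fun _ => Set.toFinite {0, 1}).subset
    (Set.range_subset_iff.2 fun ω i _ => h01 i ω)

lemma integral_dotProduct_mulVec_of_indepFun {Ω β ι : Type*} [MeasurableSpace Ω]
    [MeasurableSpace β] [Fintype ι] {μ : Measure Ω} {X : Ω → ι → ℝ} {Y : Ω → β}
    {M : β → Matrix ι ι ℝ} (hXY : X ⟂ᵢ[μ] Y)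
    (hM : ∀ j j', Measurable fun b => M b j j')
    (hXX : ∀ j j', Integrable (fun ω => X ω j * X ω j') μ)
    (hMY : ∀ j j', Integrable (fun ω => M (Y ω) j j') μ) :
    ∫ ω, X ω ⬝ᵥ (M (Y ω) *ᵥ X ω) ∂μ =
      ∫ ω, X ω ⬝ᵥ (Matrix.of (fun j j' => ∫ ω', M (Y ω') j j' ∂μ) *ᵥ X ω) ∂μ := by
  have hindep (j j' : ι) : (fun ω => X ω j * X ω j') ⟂ᵢ[μ] (fun ω => M (Y ω) j j') :=
    hXY.comp (φ := fun v : ι → ℝ => v j * v j') (by fun_prop) (hM j j')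
  have hprod (j j' : ι) : Integrable (fun ω => X ω j * X ω j' * M (Y ω) j j') μ :=
    (hindep j j').integrable_mul (hXX j j') (hMY j j')
  simp only [dotProduct_mulVec_eq_sum, of_apply]
  rw [integral_finsetSum _ fun j _ => integrable_finsetSum _ fun j' _ => hprod j j',
    integral_finsetSum _ fun j _ => integrable_finsetSum _ fun j' _ => (hXX j j').mul_const _]
  refine Finset.sum_congr rfl fun j _ => ?_
  rw [integral_finsetSum _ fun j' _ => hprod j j',
    integral_finsetSum _ fun j' _ => (hXX j j').mul_const _]
  refine Finset.sum_congr rfl fun j' _ => ?_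
  rw [integral_mul_const]
  exact (hindep j j').integral_mul_eq_mul_integral (hXX j j').1 (hMY j j').1

lemma integral_transpose_mul_self_add_mul_diagonal {Ω ι κ : Type*} [MeasurableSpace Ω]
    [Fintype ι] [DecidableEq ι] [Fintype κ] {μ : Measure Ω} [IsProbabilityMeasure μ]
    (A L : Matrix κ ι ℝ) {w : Ω → ι → ℝ} {s : ℝ}
    (hw : ∀ j, Integrable (fun ω => w ω j) μ)
    (hww : ∀ j j', Integrable (fun ω => w ω j * w ω j') μ)
    (hmean : ∀ j, ∫ ω, w ω j ∂μ = 1)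
    (hcov : ∀ j j', ∫ ω, w ω j * w ω j' ∂μ = 1 + if j = j' then s else 0) :
    Matrix.of (fun j j' => ∫ ω, ((A + L * diagonal (w ω))ᵀ * (A + L * diagonal (w ω))) j j' ∂μ) =
      (A + L)ᵀ * (A + L) + s • diagonal (fun j => (Lᵀ * L) j j) := by
  ext j j'
  set a := (Aᵀ * A) j j'
  set b := (Aᵀ * L) j j'
  set c := (Lᵀ * A) j j'
  set d := (Lᵀ * L) j j'
  have hentry : ∀ ω, ((A + L * diagonal (w ω))ᵀ * (A + L * diagonal (w ω))) j j' =
      a + b * w ω j' + c * w ω j + d * (w ω j * w ω j') := by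
    intro ω
    rw [mul_apply]
    simp only [transpose_apply, Matrix.add_apply, mul_diagonal]
    simp only [a, b, c, d, mul_apply, transpose_apply, Finset.sum_mul, ← Finset.sum_add_distrib]
    exact Finset.sum_congr rfl fun _ _ => by ring
  have h1 : Integrable (fun ω => a + b * w ω j') μ := (integrable_const _).add ((hw j').const_mul _)
  have h2 : Integrable (fun ω => a + b * w ω j' + c * w ω j) μ := h1.add ((hw j).const_mul _)
  simp only [of_apply, hentry]
  rw [integral_add h2 ((hww j j').const_mul _), integral_add h1 ((hw j).const_mul _),
    integral_add (integrable_const _) ((hw j').const_mul _)]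
  simp only [integral_const, integral_const_mul, hmean, hcov, probReal_univ, one_smul]
  rw [transpose_add, Matrix.add_mul, Matrix.mul_add, Matrix.mul_add]
  by_cases hjj : j = j' <;> simp [a, b, c, d, hjj] <;> ring

lemma integral_eq_measureReal_of_zero_or_one {Ω : Type*} [MeasurableSpace Ω] {μ : Measure Ω}
    {f : Ω → ℝ} (hf : Measurable f) (h01 : ∀ ω, f ω = 0 ∨ f ω = 1) :
    ∫ ω, f ω ∂μ = μ.real {ω | f ω = 1} := by
  have hind : f = Set.indicator {ω | f ω = 1} 1 := by
    funext ω
    rcases h01 ω with h | h <;> simp [Set.indicator, h]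
  conv_lhs => rw [hind]
  exact integral_indicator_one (hf (measurableSet_singleton 1))

lemma integral_div_mul_div_of_zero_or_one {Ω ι : Type*} [MeasurableSpace Ω] [DecidableEq ι]
    {μ : Measure Ω} {c : ι → Ω → ℝ} {p : ℝ} (hp : 0 < p) (hc : ∀ i, Measurable (c i))
    (h01 : ∀ i ω, c i ω = 0 ∨ c i ω = 1) (hmean : ∀ i, ∫ ω, c i ω ∂μ = p)
    (hindep : Pairwise fun i j => c i ⟂ᵢ[μ] c j) (i j : ι) :
    ∫ ω, c i ω / p * (c j ω / p) ∂μ = 1 + if i = j then (1 - p) / p else 0 := by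
  simp_rw [div_mul_div_comm, integral_div]
  by_cases hij : i = j
  · subst hij
    have hsq : ∀ ω, c i ω * c i ω = c i ω := fun ω => by rcases h01 i ω with h | h <;> simp [h]
    simp only [hsq, hmean, if_pos]
    field_simp
    ring
  · rw [(hindep hij).integral_fun_mul_eq_mul_integral (hc i).aestronglyMeasurable
      (hc j).aestronglyMeasurable, hmean, hmean, if_neg hij]
    field_simp
    ring

lemma integral_transpose_mul_self_of_bernoulli {Ω ι κ : Type*} [MeasurableSpace Ω]
    [Fintype ι] [DecidableEq ι] [Fintype κ] {μ : Measure Ω} [IsProbabilityMeasure μ]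
    (A L : Matrix κ ι ℝ) {c : ι → Ω → ℝ} {p : ℝ} (hp : 0 < p) (hc : ∀ i, Measurable (c i))
    (h01 : ∀ i ω, c i ω = 0 ∨ c i ω = 1) (hber : ∀ i, μ {ω | c i ω = 1} = ENNReal.ofReal p)
    (hindep : Pairwise fun i j => c i ⟂ᵢ[μ] c j) :
    Matrix.of (fun j j' => ∫ ω, ((A + L * diagonal (c · ω / p))ᵀ *
      (A + L * diagonal (c · ω / p))) j j' ∂μ) =
      (A + L)ᵀ * (A + L) + ((1 - p) / p) • diagonal (fun j => (Lᵀ * L) j j) := by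
  have hmean (i : ι) : ∫ ω, c i ω ∂μ = p := by
    rw [integral_eq_measureReal_of_zero_or_one (hc i) (h01 i), measureReal_def, hber,
      ENNReal.toReal_ofReal hp.le]
  have hint {g : (ι → ℝ) → ℝ} (hg : Measurable g) : Integrable (fun ω => g (c · ω)) μ :=
    integrable_comp_of_finite_range (finite_range_of_zero_or_one h01)
      (hg.comp (measurable_pi_lambda _ hc)).aestronglyMeasurable
  exact integral_transpose_mul_self_add_mul_diagonal A L
    (fun j => hint (g := (· j / p)) (by fun_prop))
    (fun j j' => hint (g := fun v => v j / p * (v j' / p)) (by fun_prop))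
    (fun j => by rw [integral_div, hmean, div_self hp.ne'])
    (integral_div_mul_div_of_zero_or_one hp hc h01 hmean hindep)

lemma finite_range_of_recursion {Ω α γ : Type*} {F : γ → α → α} {y : ℕ → Ω → γ}
    {x : ℕ → Ω → α} {x₀ : α} (hy : ∀ k, (Set.range (y k)).Finite) (hx0 : ∀ ω, x 0 ω = x₀)
    (hrec : ∀ k ω, x (k + 1) ω = F (y k ω) (x k ω)) (k : ℕ) : (Set.range (x k)).Finite := by
  induction k with
  | zero => exact (Set.finite_singleton x₀).subset (Set.range_subset_iff.2 hx0)
  | succ k ih =>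
    refine ((hy k).image2 F ih).subset (Set.range_subset_iff.2 fun ω => ?_)
    rw [hrec]
    exact Set.mem_image2_of_mem ⟨ω, rfl⟩ ⟨ω, rfl⟩

section DrivenRecursion

variable {Ω ι β α : Type*} [MeasurableSpace β] [MeasurableSpace α]

abbrev noiseIn (ξ : ℕ → ι → Ω → β) (S : Set ℕ) : MeasurableSpace Ω :=
  ⨆ ji ∈ Prod.fst ⁻¹' S, MeasurableSpace.comap (ξ ji.1 ji.2) inferInstance

variable {ξ : ℕ → ι → Ω → β} {F : (ι → β) → α → α} {x : ℕ → Ω → α} {x₀ : α}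

lemma measurable_noiseIn {S : Set ℕ} {k : ℕ} (hk : k ∈ S) :
    Measurable[noiseIn ξ S] fun ω i => ξ k i ω := by
  let := noiseIn ξ S
  exact measurable_pi_lambda _ fun i => Measurable.of_comap_le <|
    le_iSup₂ (f := fun (ji : ℕ × ι) (_ : ji ∈ Prod.fst ⁻¹' S) =>
      MeasurableSpace.comap (ξ ji.1 ji.2) inferInstance) (k, i) hk

lemma measurable_noiseIn_Iio_of_recursion (hF : Measurable (Function.uncurry F))
    (hx0 : ∀ ω, x 0 ω = x₀) (hrec : ∀ k ω, x (k + 1) ω = F (fun i => ξ k i ω) (x k ω))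
    (k : ℕ) : Measurable[noiseIn ξ (Set.Iio k)] (x k) := by
  induction k with
  | zero => simp [funext hx0]
  | succ k ih =>
    have hmono : noiseIn ξ (Set.Iio k) ≤ noiseIn ξ (Set.Iio (k + 1)) :=
      biSup_mono fun _ h => Set.Iio_subset_Iio (Nat.le_succ k) h
    let := noiseIn ξ (Set.Iio (k + 1))
    have hnoise : Measurable fun ω i => ξ k i ω := measurable_noiseIn (Set.mem_Iio.2 k.lt_succ_self)
    have hpast : Measurable (x k) := ih.mono hmono le_rfl
    rw [show x (k + 1) = fun ω => F (fun i => ξ k i ω) (x k ω) from funext (hrec k)]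
    exact hF.comp (hnoise.prodMk hpast)

variable [MeasurableSpace Ω]

lemma noiseIn_le (hξ : ∀ k i, Measurable (ξ k i)) (S : Set ℕ) :
    noiseIn ξ S ≤ ‹MeasurableSpace Ω› :=
  iSup₂_le fun ji _ => (hξ ji.1 ji.2).comap_le

lemma indepFun_of_recursion {μ : Measure Ω} (hξ : ∀ k i, Measurable (ξ k i))
    (hindep : iIndepFun (fun ji : ℕ × ι => ξ ji.1 ji.2) μ) (hF : Measurable (Function.uncurry F))
    (hx0 : ∀ ω, x 0 ω = x₀) (hrec : ∀ k ω, x (k + 1) ω = F (fun i => ξ k i ω) (x k ω))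
    (k : ℕ) : x k ⟂ᵢ[μ] fun ω i => ξ k i ω := by
  have hpast_now : Indep (noiseIn ξ (Set.Iio k)) (noiseIn ξ {k}) μ :=
    indep_iSup_of_disjoint
      (m := fun ji : ℕ × ι => MeasurableSpace.comap (ξ ji.1 ji.2) inferInstance)
      (fun ji => (hξ ji.1 ji.2).comap_le) ((iIndepFun_iff_iIndep _ _ _).1 hindep)
      (Disjoint.preimage _ (Set.disjoint_singleton_right.2 (lt_irrefl k)))
  rw [IndepFun_iff_Indep]
  exact indep_of_indep_of_le hpast_now
    (measurable_noiseIn_Iio_of_recursion hF hx0 hrec k).comap_le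
    (measurable_noiseIn (Set.mem_singleton k)).comap_le

end DrivenRecursion

/-- For the closed-loop stochastic recursion
`x(k+1) = (A + B K C(k)) x(k)` with `C(k) = Diag(c₁(k)/p, …, cₙ(k)/p)` built from mutually
independent Bernoulli(`p`) random variables, with `D := A + B K`, `L := B K` and
`f(p) := ‖Dᵀ D + ((1−p)/p)·Diag(Lᵀ L)‖₂`, one has
`E[‖x(k+1)‖²] ≤ f(p) · E[‖x(k)‖²]` for every `k`. -/
theorem expected_square_norm_decay
    {n m : ℕ} (A : Matrix (Fin n) (Fin n) ℝ) (B : Matrix (Fin n) (Fin m) ℝ)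
    (K : Matrix (Fin m) (Fin n) ℝ)
    {Ω : Type*} [MeasurableSpace Ω] (μ : Measure Ω) [IsProbabilityMeasure μ]
    (p : ℝ) (hp : p ∈ Set.Ioc (0 : ℝ) 1)
    (c : ℕ → Fin n → Ω → ℝ)
    (hmeas : ∀ k i, Measurable (c k i))
    (h01 : ∀ k i ω, c k i ω = 0 ∨ c k i ω = 1)
    (hber : ∀ k i, μ {ω | c k i ω = 1} = ENNReal.ofReal p)
    (hindep : iIndepFun
      (fun (ki : ℕ × Fin n) ω => c ki.1 ki.2 ω) μ)
    (x₀ : Fin n → ℝ) (x : ℕ → Ω → Fin n → ℝ)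
    (hx0 : ∀ ω, x 0 ω = x₀)
    (hxrec : ∀ k ω, x (k + 1) ω =
      (A + B * K * Matrix.diagonal (fun i => c k i ω / p)).mulVec (x k ω))
    (k : ℕ) :
    (∫ ω, ∑ i, (x (k + 1) ω i) ^ 2 ∂μ) ≤
      specNorm ((A + B * K)ᵀ * (A + B * K) + ((1 - p) / p) •
          Matrix.diagonal (fun i => ((B * K)ᵀ * (B * K)) i i)) *
        (∫ ω, ∑ i, (x k ω i) ^ 2 ∂μ) := by
  set S := (A + B * K)ᵀ * (A + B * K) + ((1 - p) / p) •
    Matrix.diagonal (fun i => ((B * K)ᵀ * (B * K)) i i)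
  set G : (Fin n → ℝ) → Matrix (Fin n) (Fin n) ℝ := fun w => A + B * K * diagonal (w · / p)
  have hG : Measurable (Function.uncurry fun w v => G w *ᵥ v) :=
    Continuous.measurable (by fun_prop)
  have hGG (j j' : Fin n) : Measurable fun w => ((G w)ᵀ * G w) j j' :=
    Continuous.measurable (by fun_prop)
  have hnoise_fin (k : ℕ) := finite_range_of_zero_or_one (h01 k)
  have hx_fin := finite_range_of_recursion (F := fun w v => G w *ᵥ v) hnoise_fin hx0 hxrec k
  have hx : Measurable (x k) :=
    (measurable_noiseIn_Iio_of_recursion hG hx0 hxrec k).mono (noiseIn_le hmeas _) le_rfl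
  have hint_x {g : (Fin n → ℝ) → ℝ} (hg : Measurable g) : Integrable (fun ω => g (x k ω)) μ :=
    integrable_comp_of_finite_range hx_fin (hg.comp hx).aestronglyMeasurable
  have hint_c {g : (Fin n → ℝ) → ℝ} (hg : Measurable g) : Integrable (fun ω => g (c k · ω)) μ :=
    integrable_comp_of_finite_range (hnoise_fin k)
      (hg.comp (measurable_pi_lambda _ (hmeas k))).aestronglyMeasurable
  have hmoments : Matrix.of (fun j j' => ∫ ω, ((G (c k · ω))ᵀ * G (c k · ω)) j j' ∂μ) = S :=
    integral_transpose_mul_self_of_bernoulli A (B * K) hp.1 (hmeas k) (h01 k) (hber k)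
      fun i j hij => hindep.indepFun (i := (k, i)) (j := (k, j)) (by simpa using hij)
  calc ∫ ω, ∑ i, x (k + 1) ω i ^ 2 ∂μ
      = ∫ ω, x k ω ⬝ᵥ (((G (c k · ω))ᵀ * G (c k · ω)) *ᵥ x k ω) ∂μ := by
        simp_rw [hxrec, sum_sq_mulVec]; rfl
    _ = ∫ ω, x k ω ⬝ᵥ (S *ᵥ x k ω) ∂μ := by
        rw [integral_dotProduct_mulVec_of_indepFun (M := fun w => (G w)ᵀ * G w)
          (indepFun_of_recursion hmeas hindep hG hx0 hxrec k) hGG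
          (fun j j' => hint_x (g := fun v => v j * v j') (by fun_prop))
          (fun j j' => hint_c (hGG j j')), hmoments]
    _ ≤ ∫ ω, specNorm S * ∑ i, x k ω i ^ 2 ∂μ :=
        integral_mono (hint_x (g := fun v => v ⬝ᵥ (S *ᵥ v)) (by fun_prop))
          (hint_x (g := fun v => specNorm S * ∑ i, v i ^ 2) (by fun_prop))
          fun ω => dotProduct_mulVec_le_specNorm_mul S (x k ω)
    _ = specNorm S * ∫ ω, ∑ i, x k ω i ^ 2 ∂μ := integral_const_mul _ _
end

section
/- Let D, L ∈ ℝ^{n×n}, sᵢ := Σ_{k=1}^{n} L_{k,i}² for i ∈ {1,…,n}, and s_max := max(s₁,…,sₙ). Assume ‖D‖₂ < 1 and s_max > 0, set α := (1 − ‖D‖₂²)/s_max, and let p ∈ (0,1] satisfy p > 1/(1 + α). Then ‖Dᵀ D + ((1−p)/p) · Diag(Lᵀ L)‖₂ < 1. -/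
/-!
By the triangle inequality, `‖DᵀD‖₂ = ‖D‖₂²` and `‖Diag(LᵀL)‖₂ = maxᵢ sᵢ = s_max`, the norm is at most
`‖D‖₂² + ((1 - p)/p) s_max`. The condition `p > 1/(1 + α)` says exactly `(1 - p)/p < α`, so this
bound is below `‖D‖₂² + α s_max = 1`.
-/

open Matrix

open scoped Matrix.Norms.L2Operator

lemma specNorm_eq_l2_opNorm {n : ℕ} (M : Matrix (Fin n) (Fin n) ℝ) : specNorm M = ‖M‖ := rfl

namespace Matrix

variable {m n : Type*} [Fintype m]

lemma transpose_mul_self_apply_self (L : Matrix m n ℝ) (i : n) :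
    (Lᵀ * L) i i = ∑ k, L k i ^ 2 := by
  simp only [mul_apply, transpose_apply, sq]

variable [Fintype n] [DecidableEq n]

lemma l2_opNorm_transpose_mul_self (D : Matrix m n ℝ) : ‖Dᵀ * D‖ = ‖D‖ ^ 2 := by
  rw [← conjTranspose_eq_transpose_of_trivial, l2_opNorm_conjTranspose_mul_self, sq]

lemma l2_opNorm_diagonal_diag_transpose_mul_self_le (L : Matrix m n ℝ) {s : ℝ} (hs : 0 ≤ s)
    (hcol : ∀ i, ∑ k, L k i ^ 2 ≤ s) : ‖diagonal fun i => (Lᵀ * L) i i‖ ≤ s := by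
  rw [l2_opNorm_diagonal, pi_norm_le_iff_of_nonneg hs]
  intro i
  rw [transpose_mul_self_apply_self, Real.norm_of_nonneg (by positivity)]
  exact hcol i

lemma l2_opNorm_transpose_mul_self_add_smul_diagonal_le (D : Matrix n n ℝ) (L : Matrix m n ℝ)
    {c s : ℝ} (hc : 0 ≤ c) (hs : 0 ≤ s) (hcol : ∀ i, ∑ k, L k i ^ 2 ≤ s) :
    ‖Dᵀ * D + c • diagonal fun i => (Lᵀ * L) i i‖ ≤ ‖D‖ ^ 2 + c * s := by
  calc ‖Dᵀ * D + c • diagonal fun i => (Lᵀ * L) i i‖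
      ≤ ‖Dᵀ * D‖ + ‖c • diagonal fun i => (Lᵀ * L) i i‖ := norm_add_le _ _
    _ = ‖D‖ ^ 2 + c * ‖diagonal fun i => (Lᵀ * L) i i‖ := by
      rw [l2_opNorm_transpose_mul_self, norm_smul, Real.norm_of_nonneg hc]
    _ ≤ ‖D‖ ^ 2 + c * s := by
      gcongr
      exact l2_opNorm_diagonal_diag_transpose_mul_self_le L hs hcol

end Matrix

lemma one_sub_div_lt_of_one_div_one_add_lt {p α : ℝ} (hp : 0 < p) (hα : 0 < 1 + α)
    (h : 1 / (1 + α) < p) : (1 - p) / p < α := by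
  rw [div_lt_iff₀ hα] at h
  rw [div_lt_iff₀ hp]
  linarith

lemma add_one_sub_div_mul_lt_one {a s p : ℝ} (ha : a < 1) (hs : 0 < s) (hp : 0 < p)
    (hpgt : 1 / (1 + (1 - a) / s) < p) : a + (1 - p) / p * s < 1 := by
  have hα : 0 < (1 - a) / s := div_pos (sub_pos.2 ha) hs
  calc a + (1 - p) / p * s
      < a + (1 - a) / s * s := by
        have := one_sub_div_lt_of_one_div_one_add_lt hp (by linarith) hpgt
        exact add_lt_add_right (mul_lt_mul_of_pos_right this hs) a
    _ = 1 := by rw [div_mul_cancel₀ _ hs.ne']; ring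

/-- Let `D, L ∈ ℝ^{n×n}`, `sᵢ := Σₖ L_{k,i}²`, `s_max := max(s₁,…,sₙ)`.
If `‖D‖₂ < 1`, `s_max > 0`, `α := (1 − ‖D‖₂²)/s_max` and `p ∈ (0,1]` with `p > 1/(1+α)`,
then `‖Dᵀ D + ((1−p)/p)·Diag(Lᵀ L)‖₂ < 1`. -/
theorem spectral_norm_lt_one_of_p_gt
    {n : ℕ} (D L : Matrix (Fin n) (Fin n) ℝ)
    (smax : ℝ) (hsmax : IsGreatest (Set.range fun i => ∑ k, (L k i) ^ 2) smax)
    (hD : specNorm D < 1) (hs : 0 < smax)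
    (p : ℝ) (hp : p ∈ Set.Ioc (0 : ℝ) 1)
    (hpgt : p > 1 / (1 + (1 - specNorm D ^ 2) / smax)) :
    specNorm (Dᵀ * D + ((1 - p) / p) •
      Matrix.diagonal (fun i => (Lᵀ * L) i i)) < 1 := by
  rw [specNorm_eq_l2_opNorm] at hD hpgt ⊢
  obtain ⟨hp0, hp1⟩ := hp
  have hc : 0 ≤ (1 - p) / p := div_nonneg (sub_nonneg.2 hp1) hp0.le
  have hD2 : ‖D‖ ^ 2 < 1 := pow_lt_one₀ (norm_nonneg D) hD two_ne_zero
  calc ‖Dᵀ * D + ((1 - p) / p) • diagonal fun i => (Lᵀ * L) i i‖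
      ≤ ‖D‖ ^ 2 + (1 - p) / p * smax :=
        l2_opNorm_transpose_mul_self_add_smul_diagonal_le D L hc hs.le fun i => hsmax.2 ⟨i, rfl⟩
    _ < 1 := add_one_sub_div_mul_lt_one hD2 hs hp0 hpgt
end
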